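/- Let d ≥ 1 and k ≥ 1 be integers, ε > 0, and let s be a string of length d^k with level-ℓ variabilities V_ℓ. For each ℓ ∈ {0,…,k−1}, let δ_ℓ = d^{−ℓ}·|{level-ℓ aligned blocks of s that are not (d,ε)-repetitive}|. Then V_k − V_0 ≥ (ε²/d)·Σ_{ℓ=0}^{k−1} δ_ℓ. -/
import Mathlib


open Finset
open scoped Classical

/-- The average of the block of `s` of length `len` starting at position `j * len`. -/
noncomputable def blockAvg (s : ℕ → ℝ) (len j : ℕ) : ℝ :=
  (∑ i ∈ Finset.range len, s (j * len + i)) / len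

/-- For a string of length `d ^ k`, the level-`ℓ` aligned block with index `j`
(of length `d ^ (k - ℓ)`) is `(d, ε)`-repetitive: the average of each of its `d`
consecutive sub-blocks (which are level-`(ℓ+1)` aligned blocks) is within `ε`
of the block's average. -/
def blockRep (s : ℕ → ℝ) (d k : ℕ) (ε : ℝ) (ℓ j : ℕ) : Prop :=
  ∀ i ∈ Finset.range d,
    |blockAvg s (d ^ (k - ℓ)) j - blockAvg s (d ^ (k - (ℓ + 1))) (j * d + i)| ≤ ε

/-- `δ_ℓ`: the fraction of level-`ℓ` aligned blocks of `s` that are not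
`(d, ε)`-repetitive. -/
noncomputable def badFrac (s : ℕ → ℝ) (d k : ℕ) (ε : ℝ) (ℓ : ℕ) : ℝ :=
  (((Finset.range (d ^ ℓ)).filter (fun j => ¬ blockRep s d k ε ℓ j)).card : ℝ) / (d ^ ℓ : ℝ)

/-- The level-`ℓ` variability `V_ℓ = d^{-ℓ} · Σ_v (x_v)²`. -/
noncomputable def variability (s : ℕ → ℝ) (d k ℓ : ℕ) : ℝ :=
  (∑ j ∈ Finset.range (d ^ ℓ), (blockAvg s (d ^ (k - ℓ)) j) ^ 2) / (d ^ ℓ : ℝ)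

lemma sum_range_mul' (f : ℕ → ℝ) (a b : ℕ) :
    ∑ i ∈ Finset.range (a * b), f i
      = ∑ p ∈ Finset.range a, ∑ q ∈ Finset.range b, f (p * b + q) := by
  induction a with
  | zero => simp
  | succ n ih =>
    rw [Nat.succ_mul, Finset.range_eq_Ico,
      ← Finset.sum_Ico_consecutive f (Nat.zero_le (n * b)) (Nat.le_add_right _ b),
      ← Finset.range_eq_Ico, ih, Finset.sum_range_succ]
    congr 1
    rw [Finset.sum_Ico_eq_sum_range]
    simp

lemma blockAvg_mul (s : ℕ → ℝ) (d m j : ℕ) :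
    blockAvg s (d * m) j = (∑ i ∈ Finset.range d, blockAvg s m (j * d + i)) / d := by
  unfold blockAvg
  rw [sum_range_mul' (fun t => s (j * (d * m) + t)) d m, ← Finset.sum_div, div_div]
  congr 1
  · refine Finset.sum_congr rfl fun p _ => Finset.sum_congr rfl fun q _ => ?_
    congr 1
    ring
  · push_cast; ring

lemma variance_ident (d : ℕ) (x : ℝ) (y : ℕ → ℝ)
    (hsum : ∑ i ∈ Finset.range d, y i = x * d) :
    ∑ i ∈ Finset.range d, (y i - x) ^ 2
      = (∑ i ∈ Finset.range d, (y i) ^ 2) - d * x ^ 2 := by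
  have : ∀ i, (y i - x) ^ 2 = (y i) ^ 2 - 2 * x * y i + x ^ 2 := fun i => by ring
  simp only [this]
  rw [Finset.sum_add_distrib, Finset.sum_sub_distrib, ← Finset.mul_sum, hsum,
    Finset.sum_const, Finset.card_range, nsmul_eq_mul]
  ring

lemma level_step (d k : ℕ) (hd : 1 ≤ d) (ε : ℝ) (hε : 0 < ε) (s : ℕ → ℝ)
    (ℓ : ℕ) (hℓ : ℓ < k) :
    (ε ^ 2 / d) * badFrac s d k ε ℓ
      ≤ variability s d k (ℓ + 1) - variability s d k ℓ := by
  have hd0 : (0 : ℝ) < d := by exact_mod_cast hd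
  have hdl : (0 : ℝ) < (d : ℝ) ^ ℓ := by positivity
  set m := d ^ (k - (ℓ + 1)) with hm
  have hpow : d ^ (k - ℓ) = d * m := by
    rw [hm, ← pow_succ']
    congr 1
    omega
  set x : ℕ → ℝ := fun j => blockAvg s (d ^ (k - ℓ)) j with hxdef
  set y : ℕ → ℝ := fun j' => blockAvg s m j' with hydef
  have hx : ∀ j, x j = (∑ i ∈ Finset.range d, y (j * d + i)) / d := by
    intro j; simp only [hxdef, hydef, hpow]; exact blockAvg_mul s d m j
  -- T j is per-block variance gain
  set T : ℕ → ℝ := fun j =>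
    (∑ i ∈ Finset.range d, (y (j * d + i) - x j) ^ 2) / d with hT
  have hTnn : ∀ j, 0 ≤ T j := fun j => by
    apply div_nonneg _ hd0.le
    exact Finset.sum_nonneg fun i _ => sq_nonneg _
  have hTbad : ∀ j, ¬ blockRep s d k ε ℓ j → ε ^ 2 / d ≤ T j := by
    intro j hb
    simp only [blockRep, not_forall] at hb
    obtain ⟨i, hi, hgt⟩ := hb
    apply div_le_div_of_nonneg_right _ hd0.le
    calc ε ^ 2 ≤ (y (j * d + i) - x j) ^ 2 := by
          have h1 : ε ≤ |y (j * d + i) - x j| := by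
            rw [abs_sub_comm]
            exact (not_le.mp hgt).le
          calc ε ^ 2 ≤ |y (j * d + i) - x j| ^ 2 := pow_le_pow_left₀ hε.le h1 2
            _ = (y (j * d + i) - x j) ^ 2 := sq_abs _
      _ ≤ ∑ i' ∈ Finset.range d, (y (j * d + i') - x j) ^ 2 :=
          Finset.single_le_sum (f := fun i' => (y (j * d + i') - x j) ^ 2) (fun i' _ => sq_nonneg _) hi
  -- rewrite the variability difference
  have hdiff : variability s d k (ℓ + 1) - variability s d k ℓ
      = (∑ j ∈ Finset.range (d ^ ℓ), T j) / (d : ℝ) ^ ℓ := by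
    have e1 : variability s d k (ℓ + 1)
        = (∑ j ∈ Finset.range (d ^ ℓ),
            (∑ i ∈ Finset.range d, (y (j * d + i)) ^ 2) / d) / (d : ℝ) ^ ℓ := by
      unfold variability
      rw [pow_succ d ℓ, sum_range_mul' (fun j' => (blockAvg s (d ^ (k - (ℓ + 1))) j') ^ 2) (d ^ ℓ) d,
        ← Finset.sum_div, div_div, pow_succ (d : ℝ) ℓ, mul_comm ((d : ℝ) ^ ℓ)]
    have e2 : variability s d k ℓ
        = (∑ j ∈ Finset.range (d ^ ℓ), (x j) ^ 2) / (d : ℝ) ^ ℓ := by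
      unfold variability; rfl
    rw [e1, e2, div_sub_div_same]
    congr 1
    rw [← Finset.sum_sub_distrib]
    refine Finset.sum_congr rfl fun j _ => ?_
    have hsum : ∑ i ∈ Finset.range d, y (j * d + i) = x j * d := by
      rw [hx j]; field_simp
    have hv : ∑ i ∈ Finset.range d, (y (j * d + i) - x j) ^ 2
        = (∑ i ∈ Finset.range d, (y (j * d + i)) ^ 2) - d * (x j) ^ 2 :=
      variance_ident d (x j) (fun i => y (j * d + i)) hsum
    show _ = (∑ i ∈ Finset.range d, (y (j * d + i) - x j) ^ 2) / d
    rw [hv, sub_div]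
    congr 1
    field_simp
  rw [hdiff]
  -- lower bound the sum by the bad blocks
  set B := (Finset.range (d ^ ℓ)).filter (fun j => ¬ blockRep s d k ε ℓ j) with hB
  have hbound : (B.card : ℝ) * (ε ^ 2 / d) ≤ ∑ j ∈ Finset.range (d ^ ℓ), T j := by
    calc (B.card : ℝ) * (ε ^ 2 / d) = ∑ _j ∈ B, ε ^ 2 / d := by
          rw [Finset.sum_const, nsmul_eq_mul]
      _ ≤ ∑ j ∈ B, T j := Finset.sum_le_sum fun j hj => by
          rw [hB, Finset.mem_filter] at hj
          exact hTbad j hj.2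
      _ ≤ ∑ j ∈ Finset.range (d ^ ℓ), T j :=
          Finset.sum_le_sum_of_subset_of_nonneg (Finset.filter_subset _ _)
            (fun j _ _ => hTnn j)
  unfold badFrac
  rw [← hB]
  have : (ε ^ 2 / d) * ((B.card : ℝ) / (d ^ ℓ : ℝ))
      = ((B.card : ℝ) * (ε ^ 2 / d)) / (d : ℝ) ^ ℓ := by
    ring
  rw [this]
  exact div_le_div_of_nonneg_right hbound hdl.le

/-- The total variability increase from level `0` to level `k` is at least
`(ε²/d) · Σ_{ℓ=0}^{k-1} δ_ℓ`. -/
theorem variability_increase (d k : ℕ) (hd : 1 ≤ d) (hk : 1 ≤ k) (ε : ℝ) (hε : 0 < ε)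
    (s : ℕ → ℝ) (hs : ∀ i < d ^ k, s i ∈ Set.Icc (0 : ℝ) 1) :
    (ε ^ 2 / d) * ∑ ℓ ∈ Finset.range k, badFrac s d k ε ℓ ≤
      variability s d k k - variability s d k 0 := by
  have tel : variability s d k k - variability s d k 0
      = ∑ ℓ ∈ Finset.range k, (variability s d k (ℓ + 1) - variability s d k ℓ) := by
    rw [Finset.sum_range_sub (fun ℓ => variability s d k ℓ)]
  rw [tel, Finset.mul_sum]
  exact Finset.sum_le_sum fun ℓ hℓ =>
    level_step d k hd ε hε s ℓ (Finset.mem_range.mp hℓ)
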